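/- Let f, g : [0,∞) → ℝ be continuous with f(t) > 0 and g(t) > 0 for all t ≥ 0, let T > 0, γ ≥ 1 and α < 0. Set F(t) = exp(∫₀^t f(s) ds), H(t) = ∫₀^t F(τ) dτ, and û(t) = max{0, -1 - γ g(t)H(t)/F(t) + λ g(t)/F(t)}, where λ > 0 is chosen such that ∫₀^T û(τ) g(τ)/F(τ) dτ = -α. Then û is the unique minimizer of the functional ∫₀^T [½|u(t)|² + |u(t)| + γ|y(t)|] dt over all u ∈ L²(0,T), where y(t) = F(t)[α + ∫₀^t (g(τ)/F(τ)) u(τ) dτ], subject to the terminal condition y(T) = 0. -/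

import Mathlib

/-!
Write `k = g / F`, so that `y_u = F (α + ∫₀ᵗ k u)` and the terminal condition reads
`∫₀ᵀ k u = -α`. Let `c` be the time at which `γ H` reaches `λ` (or `c = T`), and take the costate
`Q = max 0 (λ - γ H)`, which equals `λ - γ H` on `[0, c]` and vanishes after `c`.

Pointwise, `û = max 0 (Q k - 1)` minimises `½ v² + |v| - Q k v` with quadratic growth, so the
control cost of `u` exceeds that of `û` by at least `∫ Q k (u - û) + ½ ‖u - û‖²`. By Fubini,
`∫ Q k (u - û) = γ ∫₀ᶜ (y_u - ŷ)`, where the boundary term vanishes because either `c = T` and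
`∫₀ᵀ k (u - û) = 0`, or `γ H c = λ`. Since `ŷ ≤ 0` on `[0, c]` and `ŷ = 0` after `c`, this
bounds `γ ∫ |ŷ|` by `γ ∫ |y_u| + ∫ Q k (u - û)`. Altogether `J û + ½ ‖u - û‖² ≤ J u`.
-/

open MeasureTheory intervalIntegral Set

noncomputable def controlState (F k : ℝ → ℝ) (α : ℝ) (u : ℝ → ℝ) (t : ℝ) : ℝ :=
  F t * (α + ∫ τ in (0:ℝ)..t, k τ * u τ)

noncomputable def controlCost (γ T : ℝ) (F k : ℝ → ℝ) (α : ℝ) (u : ℝ → ℝ) : ℝ :=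
  ∫ t in (0:ℝ)..T, (1/2 * |u t| ^ 2 + |u t| + γ * |controlState F k α u t|)

/-- `max 0 (q - 1)` minimises `½ v² + |v| - q v`, with quadratic growth around it. -/
theorem half_sq_add_abs_soft_threshold_le {q : ℝ} (hq : 0 ≤ q) (v : ℝ) :
    1/2 * |max 0 (q - 1)| ^ 2 + |max 0 (q - 1)| + q * (v - max 0 (q - 1))
      + 1/2 * (v - max 0 (q - 1)) ^ 2 ≤ 1/2 * |v| ^ 2 + |v| := by
  rw [sq_abs, sq_abs]
  rcases le_or_gt q 1 with h | h
  · rw [max_eq_left (by linarith), abs_zero]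
    nlinarith [le_abs_self v, neg_abs_le v, abs_nonneg v]
  · rw [max_eq_right (by linarith), abs_of_pos (by linarith)]
    nlinarith [le_abs_self v]

theorem max_zero_max_zero_mul_sub_one {a k : ℝ} (hk : 0 ≤ k) :
    max 0 (max 0 a * k - 1) = max 0 (a * k - 1) := by
  rcases le_total 0 a with h | h
  · rw [max_eq_right h]
  · have hak : a * k - 1 ≤ 0 := by nlinarith
    rw [max_eq_left h, max_eq_left hak, zero_mul, zero_sub, max_eq_left (by norm_num)]

theorem continuousOn_primitive_zero {f : ℝ → ℝ} {T : ℝ} (hT : 0 ≤ T)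
    (hf : IntervalIntegrable f volume 0 T) :
    ContinuousOn (fun t => ∫ s in (0:ℝ)..t, f s) (Icc 0 T) := by
  simpa only [uIcc_of_le hT] using continuousOn_primitive_interval' hf left_mem_uIcc

theorem monotoneOn_primitive_zero {f : ℝ → ℝ} {T : ℝ} (hf : IntervalIntegrable f volume 0 T)
    (hf_nonneg : ∀ t ∈ Icc 0 T, 0 ≤ f t) :
    MonotoneOn (fun t => ∫ s in (0:ℝ)..t, f s) (Icc 0 T) := by
  intro a ha b hb hab
  rw [← sub_nonneg, integral_interval_sub_left
    (hf.mono_set (uIcc_subset_uIcc_left (Icc_subset_uIcc hb)))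
    (hf.mono_set (uIcc_subset_uIcc_left (Icc_subset_uIcc ha)))]
  exact integral_nonneg hab fun t ht => hf_nonneg t ⟨ha.1.trans ht.1, ht.2.trans hb.2⟩

theorem ContinuousOn.memLp_restrict_Ioc {w : ℝ → ℝ} {a b : ℝ} (hw : ContinuousOn w (Icc a b))
    (p : ENNReal) : MemLp w p (volume.restrict (Ioc a b)) := by
  obtain ⟨C, hC⟩ := isCompact_Icc.exists_bound_of_continuousOn hw
  refine MemLp.of_bound ((hw.mono Ioc_subset_Icc_self).aestronglyMeasurable measurableSet_Ioc) C ?_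
  filter_upwards [ae_restrict_mem measurableSet_Ioc] with t ht
  exact hC t (Ioc_subset_Icc_self ht)

theorem intervalIntegrable_half_sq_add_abs {u : ℝ → ℝ} {T : ℝ} (hT : 0 ≤ T)
    (hu : MemLp u 2 (volume.restrict (Ioc 0 T))) :
    IntervalIntegrable (fun t => 1/2 * |u t| ^ 2 + |u t|) volume 0 T := by
  refine (intervalIntegrable_iff_integrableOn_Ioc_of_le hT).2
    (Integrable.add ?_ (hu.integrable one_le_two).abs)
  simpa only [sq_abs] using hu.integrable_sq.const_mul (1/2)

theorem controlCost_eq_add {F k v : ℝ → ℝ} {γ T α : ℝ} (hT : 0 ≤ T)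
    (hv : MemLp v 2 (volume.restrict (Ioc 0 T)))
    (hy : ContinuousOn (controlState F k α v) (Icc 0 T)) :
    controlCost γ T F k α v = (∫ t in (0:ℝ)..T, (1/2 * |v t| ^ 2 + |v t|))
      + γ * ∫ t in (0:ℝ)..T, |controlState F k α v t| := by
  rw [controlCost, integral_add (intervalIntegrable_half_sq_add_abs hT hv)
    ((hy.abs.intervalIntegrable_of_Icc hT).const_mul γ), intervalIntegral.integral_const_mul]

theorem exists_switching_time {φ : ℝ → ℝ} {T l : ℝ} (hT : 0 ≤ T) (hφ : ContinuousOn φ (Icc 0 T))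
    (hmono : MonotoneOn φ (Icc 0 T)) (h0 : φ 0 ≤ l) :
    ∃ c ∈ Icc 0 T, (∀ t ∈ Icc 0 c, φ t ≤ l) ∧ (∀ t ∈ Ioc c T, l ≤ φ t) ∧ (c = T ∨ φ c = l) := by
  rcases le_or_gt (φ T) l with hTl | hlT
  · refine ⟨T, right_mem_Icc.2 hT, fun t ht => ?_, fun t ht => (ht.1.not_ge ht.2).elim, Or.inl rfl⟩
    exact (hmono ht (right_mem_Icc.2 hT) ht.2).trans hTl
  · obtain ⟨c, hc, hφc⟩ := intermediate_value_Icc hT hφ ⟨h0, hlT.le⟩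
    refine ⟨c, hc, fun t ht => ?_, fun t ht => ?_, Or.inr hφc⟩
    · exact hφc ▸ hmono ⟨ht.1, ht.2.trans hc.2⟩ hc ht.2
    · exact hφc ▸ hmono hc ⟨hc.1.trans ht.1.le, ht.2⟩ ht.1.le

theorem exists_switching_time_of_primitive {F H : ℝ → ℝ} {T γ l : ℝ} (hT : 0 ≤ T) (hγ : 0 ≤ γ)
    (hl : 0 ≤ l) (hF : ContinuousOn F (Icc 0 T)) (hF_nonneg : ∀ t ∈ Icc 0 T, 0 ≤ F t)
    (hH : ∀ t, H t = ∫ s in (0:ℝ)..t, F s) :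
    ∃ c ∈ Icc 0 T, (∀ t ∈ Icc 0 c, γ * H t ≤ l) ∧ (∀ t ∈ Ioc c T, l ≤ γ * H t) ∧
      (c = T ∨ γ * H c = l) := by
  obtain rfl : H = fun t => ∫ s in (0:ℝ)..t, F s := funext hH
  have hFi : IntervalIntegrable F volume 0 T := hF.intervalIntegrable_of_Icc hT
  refine exists_switching_time hT (continuousOn_const.mul (continuousOn_primitive_zero hT hFi))
    (fun a ha b hb hab => ?_) (by simpa using hl)
  exact mul_le_mul_of_nonneg_left (monotoneOn_primitive_zero hFi hF_nonneg ha hb hab) hγ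

theorem integral_mul_primitive_swap {F h : ℝ → ℝ} {c : ℝ} (hc : 0 ≤ c)
    (hF : ContinuousOn F (Icc 0 c)) (hh : IntegrableOn h (Ioc 0 c)) :
    ∫ t in (0:ℝ)..c, F t * ∫ τ in (0:ℝ)..t, h τ
      = ∫ τ in (0:ℝ)..c, (∫ s in τ..c, F s) * h τ := by
  set μ := volume.restrict (Ioc (0:ℝ) c)
  have hprod : Integrable (Function.uncurry fun t τ => F t * (Iic t).indicator h τ) (μ.prod μ) := by
    refine ((hF.integrableOn_Icc.mono_set Ioc_subset_Icc_self).mul_prod hh).indicator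
      (measurableSet_le measurable_snd measurable_fst) |>.congr (ae_of_all _ ?_)
    rintro ⟨t, τ⟩
    by_cases hτt : τ ≤ t <;> simp [Function.uncurry, indicator, hτt]
  rw [integral_of_le hc, integral_of_le hc]
  calc ∫ t in Ioc 0 c, F t * ∫ τ in (0:ℝ)..t, h τ
      = ∫ t, ∫ τ, F t * (Iic t).indicator h τ ∂μ ∂μ := by
        refine setIntegral_congr_fun measurableSet_Ioc fun t ht => ?_
        rw [MeasureTheory.integral_const_mul, MeasureTheory.integral_indicator measurableSet_Iic,
          Measure.restrict_restrict measurableSet_Iic, integral_of_le ht.1.le,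
          Iic_inter_Ioc_of_le ht.2]
    _ = ∫ τ, ∫ t, F t * (Iic t).indicator h τ ∂μ ∂μ := integral_integral_swap hprod
    _ = ∫ τ in Ioc 0 c, (∫ s in τ..c, F s) * h τ := by
        refine setIntegral_congr_fun measurableSet_Ioc fun τ hτ => ?_
        have hind : (fun t => F t * (Iic t).indicator h τ)
            = (Ici τ).indicator (fun t => F t * h τ) := by
          ext t
          by_cases hτt : τ ≤ t <;> simp [indicator, hτt]
        have hset : Ici τ ∩ Ioc 0 c = Icc τ c := by
          ext t
          simp only [mem_inter_iff, mem_Ici, mem_Ioc, mem_Icc]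
          exact ⟨fun h => ⟨h.1, h.2.2⟩, fun h => ⟨h.1, hτ.1.trans_le h.1, h.2⟩⟩
        rw [hind, MeasureTheory.integral_indicator measurableSet_Ici,
          Measure.restrict_restrict measurableSet_Ici, hset, integral_Icc_eq_integral_Ioc, MeasureTheory.integral_mul_const, integral_of_le hτ.2]

theorem integral_sub_mul_primitive_mul {F h : ℝ → ℝ} {c l γ : ℝ} (hc : 0 ≤ c)
    (hF : ContinuousOn F (Icc 0 c)) (hh : IntegrableOn h (Ioc 0 c))
    (hbdry : (l - γ * ∫ s in (0:ℝ)..c, F s) * ∫ τ in (0:ℝ)..c, h τ = 0) :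
    ∫ τ in (0:ℝ)..c, (l - γ * ∫ s in (0:ℝ)..τ, F s) * h τ
      = γ * ∫ t in (0:ℝ)..c, F t * ∫ τ in (0:ℝ)..t, h τ := by
  have hFi : IntervalIntegrable F volume 0 c := hF.intervalIntegrable_of_Icc hc
  have hhi : IntervalIntegrable h volume 0 c :=
    (intervalIntegrable_iff_integrableOn_Ioc_of_le hc).2 hh
  have htail : ContinuousOn (fun τ => ∫ s in τ..c, F s) (uIcc 0 c) :=
    continuousOn_primitive_interval_left (by rw [uIcc_of_le hc]; exact hF.integrableOn_Icc)
  have hsplit : ∀ τ ∈ uIcc 0 c, (l - γ * ∫ s in (0:ℝ)..τ, F s) * h τ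
      = (l - γ * ∫ s in (0:ℝ)..c, F s) * h τ + γ * ((∫ s in τ..c, F s) * h τ) := by
    intro τ hτ
    rw [← integral_add_adjacent_intervals (hFi.mono_set (uIcc_subset_uIcc_left hτ))
      (hFi.mono_set (uIcc_subset_uIcc_right hτ))]
    ring
  rw [integral_mul_primitive_swap hc hF hh, integral_congr hsplit,
    integral_add (hhi.const_mul _) ((hhi.continuousOn_mul htail).const_mul γ),
    intervalIntegral.integral_const_mul, intervalIntegral.integral_const_mul, hbdry, zero_add]

theorem integral_costate_mul {F H h : ℝ → ℝ} {c T l γ : ℝ} (hc : c ∈ Icc 0 T)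
    (hF : ContinuousOn F (Icc 0 T)) (hH : ∀ t, H t = ∫ s in (0:ℝ)..t, F s)
    (hh : IntegrableOn h (Ioc 0 T)) (hh0 : ∫ τ in (0:ℝ)..T, h τ = 0)
    (h_before : ∀ t ∈ Icc 0 c, γ * H t ≤ l) (h_after : ∀ t ∈ Ioc c T, l ≤ γ * H t)
    (hc_end : c = T ∨ γ * H c = l) :
    ∫ τ in (0:ℝ)..T, max 0 (l - γ * H τ) * h τ
      = γ * ∫ t in (0:ℝ)..c, F t * ∫ τ in (0:ℝ)..t, h τ := by
  have hT : 0 ≤ T := hc.1.trans hc.2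
  have hH_cont : ContinuousOn H (Icc 0 T) :=
    (continuousOn_primitive_zero hT (hF.intervalIntegrable_of_Icc hT)).congr fun t _ => hH t
  have hQh : IntervalIntegrable (fun τ => max 0 (l - γ * H τ) * h τ) volume 0 T :=
    ((intervalIntegrable_iff_integrableOn_Ioc_of_le hT).2 hh).continuousOn_mul <| by
      rw [uIcc_of_le hT]
      exact continuousOn_const.sup (continuousOn_const.sub (continuousOn_const.mul hH_cont))
  have hc' : c ∈ uIcc 0 T := Icc_subset_uIcc hc
  have htail : ∫ τ in c..T, max 0 (l - γ * H τ) * h τ = 0 := by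
    rw [integral_congr_ae (g := fun _ => 0) (ae_of_all _ fun t ht => ?_),
      intervalIntegral.integral_zero]
    rw [uIoc_of_le hc.2] at ht
    rw [max_eq_left (sub_nonpos.2 (h_after t ht)), zero_mul]
  have hhead : ∫ τ in (0:ℝ)..c, max 0 (l - γ * H τ) * h τ
      = ∫ τ in (0:ℝ)..c, (l - γ * ∫ s in (0:ℝ)..τ, F s) * h τ := by
    refine integral_congr fun τ hτ => ?_
    rw [uIcc_of_le hc.1] at hτ
    rw [max_eq_right (sub_nonneg.2 (h_before τ hτ)), hH]
  rw [← integral_add_adjacent_intervals (hQh.mono_set (uIcc_subset_uIcc_left hc'))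
    (hQh.mono_set (uIcc_subset_uIcc_right hc')), htail, add_zero, hhead,
    integral_sub_mul_primitive_mul hc.1 (hF.mono (Icc_subset_Icc_right hc.2))
      (hh.mono_set (Ioc_subset_Ioc_right hc.2))]
  rcases hc_end with rfl | hcl
  · rw [hh0, mul_zero]
  · rw [← hH, hcl, sub_self, zero_mul]

theorem integral_abs_le_integral_abs_add_integral_sub {y z : ℝ → ℝ} {c T : ℝ} (hc : c ∈ Icc 0 T)
    (hy : ContinuousOn y (Icc 0 T)) (hz : ContinuousOn z (Icc 0 T))
    (hz_nonpos : ∀ t ∈ Icc 0 c, z t ≤ 0) (hz_zero : ∀ t ∈ Ioc c T, z t = 0) :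
    ∫ t in (0:ℝ)..T, |z t| ≤ (∫ t in (0:ℝ)..T, |y t|) + ∫ t in (0:ℝ)..c, (y t - z t) := by
  have hi : ∀ φ : ℝ → ℝ, ContinuousOn φ (Icc 0 T) → ∀ a ∈ Icc 0 T, ∀ b ∈ Icc 0 T,
      IntervalIntegrable φ volume a b :=
    fun φ hφ a ha b hb => (hφ.mono (uIcc_subset_Icc ha hb)).intervalIntegrable
  have h0 : (0:ℝ) ∈ Icc 0 T := left_mem_Icc.2 (hc.1.trans hc.2)
  have hT : T ∈ Icc 0 T := right_mem_Icc.2 (hc.1.trans hc.2)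
  have hz_tail : ∫ t in c..T, |z t| = 0 := by
    rw [integral_congr_ae (g := fun _ => 0) (ae_of_all _ fun t ht => ?_),
      intervalIntegral.integral_zero]
    rw [uIoc_of_le hc.2] at ht
    simp [hz_zero t ht]
  have hy_tail : 0 ≤ ∫ t in c..T, |y t| := integral_nonneg hc.2 fun _ _ => abs_nonneg _
  have hhead : ∫ t in (0:ℝ)..c, |z t| ≤ ∫ t in (0:ℝ)..c, (|y t| + (y t - z t)) :=
    integral_mono_on hc.1 (hi _ hz.abs 0 h0 c hc)
      ((hi _ hy.abs 0 h0 c hc).add ((hi y hy 0 h0 c hc).sub (hi z hz 0 h0 c hc))) fun t ht => by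
      rw [abs_of_nonpos (hz_nonpos t ht)]
      linarith [neg_abs_le (y t)]
  rw [integral_add (hi _ hy.abs 0 h0 c hc) ((hi y hy 0 h0 c hc).sub (hi z hz 0 h0 c hc))] at hhead
  rw [← integral_add_adjacent_intervals (hi _ hz.abs 0 h0 c hc) (hi _ hz.abs c hc T hT),
    ← integral_add_adjacent_intervals (hi _ hy.abs 0 h0 c hc) (hi _ hy.abs c hc T hT), hz_tail]
  linarith

theorem continuousOn_controlState {F k u : ℝ → ℝ} {α T : ℝ} (hT : 0 ≤ T)
    (hF : ContinuousOn F (Icc 0 T)) (hku : IntervalIntegrable (fun τ => k τ * u τ) volume 0 T) :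
    ContinuousOn (controlState F k α u) (Icc 0 T) :=
  hF.mul (continuousOn_const.add (continuousOn_primitive_zero hT hku))

theorem controlState_sub_controlState {F k u w : ℝ → ℝ} {α t : ℝ}
    (hu : IntervalIntegrable (fun τ => k τ * u τ) volume 0 t)
    (hw : IntervalIntegrable (fun τ => k τ * w τ) volume 0 t) :
    controlState F k α u t - controlState F k α w t
      = F t * ∫ τ in (0:ℝ)..t, k τ * (u τ - w τ) := by
  simp_rw [controlState, mul_sub]
  rw [integral_sub hu hw]
  ring

theorem controlState_eq_neg_integral {F k w : ℝ → ℝ} {α T t : ℝ}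
    (hkw : IntervalIntegrable (fun τ => k τ * w τ) volume 0 T)
    (hmom : ∫ τ in (0:ℝ)..T, k τ * w τ = -α) (ht : t ∈ Icc 0 T) :
    controlState F k α w t = -(F t * ∫ τ in t..T, k τ * w τ) := by
  have ht' : t ∈ uIcc 0 T := Icc_subset_uIcc ht
  rw [← integral_add_adjacent_intervals (hkw.mono_set (uIcc_subset_uIcc_left ht'))
    (hkw.mono_set (uIcc_subset_uIcc_right ht'))] at hmom
  rw [controlState, show α + ∫ τ in (0:ℝ)..t, k τ * w τ = -∫ τ in t..T, k τ * w τ by linarith]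
  ring

theorem controlState_nonpos {F k w : ℝ → ℝ} {α T t : ℝ} (hF : 0 ≤ F t)
    (hkw : IntervalIntegrable (fun τ => k τ * w τ) volume 0 T)
    (hkw_nonneg : ∀ τ ∈ Icc 0 T, 0 ≤ k τ * w τ)
    (hmom : ∫ τ in (0:ℝ)..T, k τ * w τ = -α) (ht : t ∈ Icc 0 T) :
    controlState F k α w t ≤ 0 := by
  rw [controlState_eq_neg_integral hkw hmom ht, neg_nonpos]
  exact mul_nonneg hF (integral_nonneg ht.2 fun τ hτ => hkw_nonneg τ ⟨ht.1.trans hτ.1, hτ.2⟩)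

theorem controlState_eq_zero {F k w : ℝ → ℝ} {α T t : ℝ}
    (hkw : IntervalIntegrable (fun τ => k τ * w τ) volume 0 T)
    (hmom : ∫ τ in (0:ℝ)..T, k τ * w τ = -α) (ht : t ∈ Icc 0 T)
    (hw : ∀ τ ∈ Icc t T, w τ = 0) :
    controlState F k α w t = 0 := by
  rw [controlState_eq_neg_integral hkw hmom ht, integral_congr (g := fun _ => 0) fun τ hτ => ?_,
    intervalIntegral.integral_zero, mul_zero, neg_zero]
  rw [uIcc_of_le ht.2] at hτ
  simp [hw τ hτ]

theorem integral_abs_controlState_le {F k u w : ℝ → ℝ} {c T α : ℝ} (hc : c ∈ Icc 0 T)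
    (hF : ContinuousOn F (Icc 0 T)) (hF_nonneg : ∀ t ∈ Icc 0 T, 0 ≤ F t)
    (hku : IntervalIntegrable (fun t => k t * u t) volume 0 T)
    (hkw : IntervalIntegrable (fun t => k t * w t) volume 0 T)
    (hkw_nonneg : ∀ t ∈ Icc 0 T, 0 ≤ k t * w t) (hw_after : ∀ t ∈ Ioc c T, w t = 0)
    (hmom : ∫ t in (0:ℝ)..T, k t * w t = -α) :
    ∫ t in (0:ℝ)..T, |controlState F k α w t| ≤ (∫ t in (0:ℝ)..T, |controlState F k α u t|)
      + ∫ t in (0:ℝ)..c, F t * ∫ τ in (0:ℝ)..t, k τ * (u τ - w τ) := by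
  have hT : 0 ≤ T := hc.1.trans hc.2
  have hdiff : ∫ t in (0:ℝ)..c, (controlState F k α u t - controlState F k α w t)
      = ∫ t in (0:ℝ)..c, F t * ∫ τ in (0:ℝ)..t, k τ * (u τ - w τ) := by
    refine integral_congr fun t ht => ?_
    rw [uIcc_of_le hc.1] at ht
    have hsub := uIcc_subset_uIcc_left (Icc_subset_uIcc (a := (0:ℝ)) ⟨ht.1, ht.2.trans hc.2⟩)
    exact controlState_sub_controlState (hku.mono_set hsub) (hkw.mono_set hsub)
  rw [← hdiff]
  refine integral_abs_le_integral_abs_add_integral_sub hc (continuousOn_controlState hT hF hku)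
    (continuousOn_controlState hT hF hkw) (fun t ht => ?_) (fun t ht => ?_)
  · have ht' : t ∈ Icc 0 T := ⟨ht.1, ht.2.trans hc.2⟩
    exact controlState_nonpos (hF_nonneg t ht') hkw hkw_nonneg hmom ht'
  · exact controlState_eq_zero hkw hmom ⟨hc.1.trans ht.1.le, ht.2⟩
      fun τ hτ => hw_after τ ⟨ht.1.trans_le hτ.1, hτ.2⟩

theorem integral_soft_threshold_add_le {q w u : ℝ → ℝ} {T : ℝ} (hT : 0 ≤ T)
    (hq : ContinuousOn q (Icc 0 T)) (hq_nonneg : ∀ t ∈ Icc 0 T, 0 ≤ q t)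
    (hw : ∀ t ∈ Icc 0 T, w t = max 0 (q t - 1)) (hu : MemLp u 2 (volume.restrict (Ioc 0 T))) :
    (∫ t in (0:ℝ)..T, (1/2 * |w t| ^ 2 + |w t|)) + (∫ t in (0:ℝ)..T, q t * (u t - w t))
      + 1/2 * ∫ t in (0:ℝ)..T, (u t - w t) ^ 2 ≤ ∫ t in (0:ℝ)..T, (1/2 * |u t| ^ 2 + |u t|) := by
  have hii : ∀ φ : ℝ → ℝ, IntegrableOn φ (Ioc 0 T) → IntervalIntegrable φ volume 0 T :=
    fun φ => (intervalIntegrable_iff_integrableOn_Ioc_of_le hT).2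
  have hwc : ContinuousOn w (Icc 0 T) :=
    (continuousOn_const.sup (hq.sub continuousOn_const)).congr hw
  have hd : MemLp (fun t => u t - w t) 2 (volume.restrict (Ioc 0 T)) :=
    hu.sub (hwc.memLp_restrict_Ioc 2)
  have I1 := intervalIntegrable_half_sq_add_abs hT (hwc.memLp_restrict_Ioc 2)
  have I2 : IntervalIntegrable (fun t => q t * (u t - w t)) volume 0 T :=
    (hii _ (hd.integrable one_le_two)).continuousOn_mul (by rwa [uIcc_of_le hT])
  have I3 : IntervalIntegrable (fun t => (u t - w t) ^ 2) volume 0 T := hii _ hd.integrable_sq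
  have I4 := intervalIntegrable_half_sq_add_abs hT hu
  rw [← intervalIntegral.integral_const_mul, ← integral_add I1 I2,
    ← integral_add (I1.add I2) (I3.const_mul _)]
  refine integral_mono_on hT ((I1.add I2).add (I3.const_mul _)) I4 fun t ht => ?_
  rw [hw t ht]
  exact half_sq_add_abs_soft_threshold_le (hq_nonneg t ht) (u t)

theorem controlCost_add_integral_sq_le {F H k w u : ℝ → ℝ} {T γ l α : ℝ} (hT : 0 ≤ T)
    (hγ : 0 ≤ γ) (hl : 0 ≤ l) (hF : ContinuousOn F (Icc 0 T)) (hF_nonneg : ∀ t ∈ Icc 0 T, 0 ≤ F t)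
    (hH : ∀ t, H t = ∫ s in (0:ℝ)..t, F s)
    (hk : ContinuousOn k (Icc 0 T)) (hk_nonneg : ∀ t ∈ Icc 0 T, 0 ≤ k t)
    (hw : ∀ t ∈ Icc 0 T, w t = max 0 ((l - γ * H t) * k t - 1))
    (hmom : ∫ t in (0:ℝ)..T, k t * w t = -α)
    (hu : MemLp u 2 (volume.restrict (Ioc 0 T))) (hterm : ∫ t in (0:ℝ)..T, k t * u t = -α) :
    controlCost γ T F k α w + 1/2 * ∫ t in (0:ℝ)..T, (u t - w t) ^ 2
      ≤ controlCost γ T F k α u := by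
  obtain ⟨c, hc, h_before, h_after, hc_end⟩ :=
    exists_switching_time_of_primitive hT hγ hl hF hF_nonneg hH
  have hQk_nonneg : ∀ t ∈ Icc 0 T, 0 ≤ max 0 (l - γ * H t) * k t :=
    fun t ht => mul_nonneg (le_max_left _ _) (hk_nonneg t ht)
  have hw_Q : ∀ t ∈ Icc 0 T, w t = max 0 (max 0 (l - γ * H t) * k t - 1) := fun t ht =>
    (hw t ht).trans (max_zero_max_zero_mul_sub_one (hk_nonneg t ht)).symm
  have hw_after : ∀ t ∈ Ioc c T, w t = 0 := fun t ht => by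
    rw [hw_Q t ⟨hc.1.trans ht.1.le, ht.2⟩, max_eq_left (sub_nonpos.2 (h_after t ht))]
    norm_num
  have hH_cont : ContinuousOn H (Icc 0 T) :=
    (continuousOn_primitive_zero hT (hF.intervalIntegrable_of_Icc hT)).congr fun t _ => hH t
  have hQk_cont : ContinuousOn (fun t => max 0 (l - γ * H t) * k t) (Icc 0 T) :=
    (continuousOn_const.sup (continuousOn_const.sub (continuousOn_const.mul hH_cont))).mul hk
  have hw_cont : ContinuousOn w (Icc 0 T) :=
    (continuousOn_const.sup (hQk_cont.sub continuousOn_const)).congr hw_Q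
  have hk' : ContinuousOn k (uIcc 0 T) := by rwa [uIcc_of_le hT]
  have hiu : IntervalIntegrable u volume 0 T :=
    (intervalIntegrable_iff_integrableOn_Ioc_of_le hT).2 (hu.integrable one_le_two)
  have hku : IntervalIntegrable (fun t => k t * u t) volume 0 T := hiu.continuousOn_mul hk'
  have hkw : IntervalIntegrable (fun t => k t * w t) volume 0 T :=
    (hk.mul hw_cont).intervalIntegrable_of_Icc hT
  have hkd : IntervalIntegrable (fun t => k t * (u t - w t)) volume 0 T :=
    (hiu.sub (hw_cont.intervalIntegrable_of_Icc hT)).continuousOn_mul hk'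
  have hcontrol := integral_soft_threshold_add_le (q := fun t => max 0 (l - γ * H t) * k t)
    hT hQk_cont hQk_nonneg hw_Q hu
  have hkd0 : ∫ t in (0:ℝ)..T, k t * (u t - w t) = 0 := by
    simp_rw [mul_sub]
    rw [integral_sub hku hkw, hterm, hmom, sub_self]
  have hadj := integral_costate_mul hc hF hH
    ((intervalIntegrable_iff_integrableOn_Ioc_of_le hT).1 hkd) hkd0 h_before h_after hc_end
  have hstate := integral_abs_controlState_le hc hF hF_nonneg hku hkw
    (fun t ht => mul_nonneg (hk_nonneg t ht) ((hw t ht).symm ▸ le_max_left _ _)) hw_after hmom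
  simp_rw [mul_assoc] at hcontrol
  rw [controlCost_eq_add hT (hw_cont.memLp_restrict_Ioc 2) (continuousOn_controlState hT hF hkw),
    controlCost_eq_add hT hu (continuousOn_controlState hT hF hku)]
  linarith [mul_le_mul_of_nonneg_left hstate hγ]

theorem ae_eq_of_integral_sq_sub_nonpos {u w : ℝ → ℝ} {T : ℝ} (hT : 0 ≤ T)
    (hd : MemLp (fun t => u t - w t) 2 (volume.restrict (Ioc 0 T)))
    (h : ∫ t in (0:ℝ)..T, (u t - w t) ^ 2 ≤ 0) : u =ᵐ[volume.restrict (Ioc 0 T)] w := by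
  rw [integral_of_le hT] at h
  have h0 : ∫ t in Ioc 0 T, (u t - w t) ^ 2 = 0 :=
    le_antisymm h (setIntegral_nonneg measurableSet_Ioc fun _ _ => sq_nonneg _)
  filter_upwards [(integral_eq_zero_iff_of_nonneg (fun _ => sq_nonneg _) hd.integrable_sq).1 h0]
    with t ht
  exact sub_eq_zero.1 (pow_eq_zero_iff two_ne_zero |>.1 ht)

theorem stmt_8_general (f g : ℝ → ℝ)
    (hf : ContinuousOn f (Set.Ici 0)) (hg : ContinuousOn g (Set.Ici 0))
    (hgpos : ∀ t : ℝ, 0 ≤ t → 0 < g t)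
    (T γ α lam : ℝ) (hT : 0 < T) (hγ : 1 ≤ γ) (hlam : 0 < lam)
    (F H uhat : ℝ → ℝ)
    (hF : ∀ t, F t = Real.exp (∫ s in (0:ℝ)..t, f s))
    (hH : ∀ t, H t = ∫ τ in (0:ℝ)..t, F τ)
    (huhat : ∀ t, uhat t
      = max 0 (-1 - γ * (g t * H t) / F t + lam * (g t / F t)))
    (hmom : ∫ τ in (0:ℝ)..T, uhat τ * (g τ / F τ) = -α)
    (J : (ℝ → ℝ) → ℝ)
    (hJ : ∀ u : ℝ → ℝ,
      J u = ∫ t in (0:ℝ)..T,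
        (1/2 * |u t|^2 + |u t|
          + γ * |F t * (α + ∫ τ in (0:ℝ)..t, (g τ / F τ) * u τ)|)) :
    F T * (α + ∫ τ in (0:ℝ)..T, (g τ / F τ) * uhat τ) = 0 ∧
    (∀ u : ℝ → ℝ, MemLp u 2 (volume.restrict (Set.Ioc (0:ℝ) T)) →
      F T * (α + ∫ τ in (0:ℝ)..T, (g τ / F τ) * u τ) = 0 →
      J uhat ≤ J u) ∧
    (∀ u : ℝ → ℝ, MemLp u 2 (volume.restrict (Set.Ioc (0:ℝ) T)) →
      F T * (α + ∫ τ in (0:ℝ)..T, (g τ / F τ) * u τ) = 0 →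
      J u = J uhat → u =ᵐ[volume.restrict (Set.Ioc (0:ℝ) T)] uhat) := by
  have hF_pos : ∀ t, 0 < F t := fun t => hF t ▸ Real.exp_pos _
  have hF_cont : ContinuousOn F (Icc 0 T) :=
    (Real.continuous_exp.comp_continuousOn (continuousOn_primitive_zero hT.le
      ((hf.mono Icc_subset_Ici_self).intervalIntegrable_of_Icc hT.le))).congr fun t _ => hF t
  have hH_cont : ContinuousOn H (Icc 0 T) := (continuousOn_primitive_zero hT.le
    (hF_cont.intervalIntegrable_of_Icc hT.le)).congr fun t _ => hH t
  have hk_cont : ContinuousOn (fun t => g t / F t) (Icc 0 T) :=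
    (hg.mono Icc_subset_Ici_self).div hF_cont fun t _ => (hF_pos t).ne'
  have huhat' : ∀ t ∈ Icc 0 T, uhat t = max 0 ((lam - γ * H t) * (g t / F t) - 1) :=
    fun t _ => by rw [huhat]; congr 1; ring
  have huhat_cont : ContinuousOn uhat (Icc 0 T) := (continuousOn_const.sup
    (((continuousOn_const.sub (continuousOn_const.mul hH_cont)).mul hk_cont).sub
      continuousOn_const)).congr huhat'
  have hmom' : ∫ t in (0:ℝ)..T, g t / F t * uhat t = -α := by simpa only [mul_comm] using hmom
  have hterm : ∀ u : ℝ → ℝ, F T * (α + ∫ τ in (0:ℝ)..T, g τ / F τ * u τ) = 0 →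
      ∫ τ in (0:ℝ)..T, g τ / F τ * u τ = -α := fun u h => by
    linarith [(mul_eq_zero.1 h).resolve_left (hF_pos T).ne']
  have key := fun u hu hu_T => controlCost_add_integral_sq_le (α := α) (u := u) hT.le (by linarith)
    hlam.le hF_cont (fun t _ => (hF_pos t).le) hH hk_cont
    (fun t ht => (div_pos (hgpos t ht.1) (hF_pos t)).le) huhat' hmom' hu (hterm u hu_T)
  have hJ_eq : ∀ u, J u = controlCost γ T F (fun t => g t / F t) α u := hJ
  refine ⟨by rw [hmom']; ring, fun u hu hu_T => ?_, fun u hu hu_T hJu => ?_⟩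
  · rw [hJ_eq, hJ_eq]
    linarith [key u hu hu_T,
      integral_nonneg (μ := volume) hT.le fun t _ => sq_nonneg (u t - uhat t)]
  · refine ae_eq_of_integral_sq_sub_nonpos hT.le (hu.sub (huhat_cont.memLp_restrict_Ioc 2)) ?_
    rw [hJ_eq, hJ_eq] at hJu
    linarith [key u hu hu_T]

/-- For the general scalar ODE `y' = f y + g u` with continuous
positive `f, g`, `γ ≥ 1`, `α < 0`, with `F(t) = exp(∫₀^t f)`, `H(t) = ∫₀^t F`,
and `uhat(t) = max{0, -1 - γ g(t)H(t)/F(t) + λ g(t)/F(t)}` where `λ > 0` is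
chosen so that `∫₀^T uhat g/F = -α`, the control `uhat` is the unique (up to
a.e. equality) minimizer of `∫₀^T [½|u|² + |u| + γ|y|]` over all
`u ∈ L²(0,T)` whose state `y(t) = F(t)(α + ∫₀^t (g/F)u)` satisfies the
terminal condition `y(T) = 0`. -/
theorem stmt_8 (f g : ℝ → ℝ)
    (hf : ContinuousOn f (Set.Ici 0)) (hg : ContinuousOn g (Set.Ici 0))
    (hfpos : ∀ t : ℝ, 0 ≤ t → 0 < f t) (hgpos : ∀ t : ℝ, 0 ≤ t → 0 < g t)
    (T γ α lam : ℝ) (hT : 0 < T) (hγ : 1 ≤ γ) (hα : α < 0) (hlam : 0 < lam)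
    (F H uhat : ℝ → ℝ)
    (hF : ∀ t, F t = Real.exp (∫ s in (0:ℝ)..t, f s))
    (hH : ∀ t, H t = ∫ τ in (0:ℝ)..t, F τ)
    (huhat : ∀ t, uhat t
      = max 0 (-1 - γ * (g t * H t) / F t + lam * (g t / F t)))
    (hmom : ∫ τ in (0:ℝ)..T, uhat τ * (g τ / F τ) = -α)
    (J : (ℝ → ℝ) → ℝ)
    (hJ : ∀ u : ℝ → ℝ,
      J u = ∫ t in (0:ℝ)..T,
        (1/2 * |u t|^2 + |u t|
          + γ * |F t * (α + ∫ τ in (0:ℝ)..t, (g τ / F τ) * u τ)|)) :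
    F T * (α + ∫ τ in (0:ℝ)..T, (g τ / F τ) * uhat τ) = 0 ∧
    (∀ u : ℝ → ℝ, MemLp u 2 (volume.restrict (Set.Ioc (0:ℝ) T)) →
      F T * (α + ∫ τ in (0:ℝ)..T, (g τ / F τ) * u τ) = 0 →
      J uhat ≤ J u) ∧
    (∀ u : ℝ → ℝ, MemLp u 2 (volume.restrict (Set.Ioc (0:ℝ) T)) →
      F T * (α + ∫ τ in (0:ℝ)..T, (g τ / F τ) * u τ) = 0 →
      J u = J uhat → u =ᵐ[volume.restrict (Set.Ioc (0:ℝ) T)] uhat) :=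
  stmt_8_general f g hf hg hgpos T γ α lam hT hγ hlam F H uhat hF hH huhat hmom J hJ
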